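/- Every stochastically increasing bivariate copula C satisfies ξ(C) ≤ ψ(C). -/

import Mathlib

open MeasureTheory Set

noncomputable section

def IsCopula (C : ℝ → ℝ → ℝ) : Prop :=
  (∀ u ∈ Icc (0:ℝ) 1, ∀ v ∈ Icc (0:ℝ) 1, C u v ∈ Icc (0:ℝ) 1) ∧
  (∀ u ∈ Icc (0:ℝ) 1, C u 0 = 0 ∧ C u 1 = u) ∧
  (∀ v ∈ Icc (0:ℝ) 1, C 0 v = 0 ∧ C 1 v = v) ∧
  (∀ u₁ ∈ Icc (0:ℝ) 1, ∀ u₂ ∈ Icc (0:ℝ) 1, ∀ v₁ ∈ Icc (0:ℝ) 1, ∀ v₂ ∈ Icc (0:ℝ) 1,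
    u₁ ≤ u₂ → v₁ ≤ v₂ → 0 ≤ C u₂ v₂ - C u₁ v₂ - C u₂ v₁ + C u₁ v₁)

/-- The (a.e. defined) partial derivative of `C` with respect to its first argument. -/
def d1 (C : ℝ → ℝ → ℝ) (t v : ℝ) : ℝ := deriv (fun s => C s v) t

/-- Chatterjee's rank correlation. -/
def xi (C : ℝ → ℝ → ℝ) : ℝ :=
  6 * (∫ v in (0:ℝ)..1, ∫ t in (0:ℝ)..1, (d1 C t v) ^ 2) - 2

/-- Spearman's footrule. -/
def psi (C : ℝ → ℝ → ℝ) : ℝ :=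
  6 * (∫ v in (0:ℝ)..1, C v v) - 2

/-- Stochastically increasing: for each `v`, `t ↦ ∂₁C(t,v)` agrees a.e. on `[0,1]`
with a non-increasing function. -/
def IsSI (C : ℝ → ℝ → ℝ) : Prop :=
  ∀ v ∈ Icc (0:ℝ) 1, ∃ g : ℝ → ℝ, AntitoneOn g (Icc (0:ℝ) 1) ∧
    (∀ᵐ t ∂(volume.restrict (Icc (0:ℝ) 1)), d1 C t v = g t)

/-!
Fix `v` and let `D := ∂₁C(·, v)`. Since `C(·, v)` is monotone and `1`-Lipschitz, `D ∈ [0, 1]`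
and `∫₀ᵇ D = C(b, v)` (fundamental theorem of calculus for absolutely continuous functions).
If `D` agrees a.e. with a non-increasing `g`, put `c := max (g v) 0`: then `D ≥ c` on `[0, v]`
and `D ≤ c` on `[v, 1]`, so `(D - c) (D - 1_{[0,v]}) ≤ 0`. Integrating gives
`∫₀¹ D² ≤ ∫₀ᵛ D + c (∫₀¹ D - v) = C(v, v)`, and integrating over `v` gives `ξ(C) ≤ ψ(C)`.
-/

open Filter Topology

theorem integral_sq_le_of_ae_le_of_ae_ge {f : ℝ → ℝ} {v c : ℝ} (hv : v ∈ Icc (0:ℝ) 1)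
    (hfi : IntegrableOn f (Icc 0 1))
    (hf01 : ∀ᵐ t ∂volume.restrict (Icc (0:ℝ) 1), f t ∈ Icc (0:ℝ) 1)
    (hleft : ∀ᵐ t ∂volume.restrict (Icc 0 v), c ≤ f t)
    (hright : ∀ᵐ t ∂volume.restrict (Icc v 1), f t ≤ c) :
    ∫ t in 0..1, f t ^ 2 ≤ (∫ t in 0..v, f t) + c * ((∫ t in 0..1, f t) - v) := by
  have hf2i : IntegrableOn (fun t => f t ^ 2) (Icc 0 1) := by
    refine hfi.mono' (hfi.aestronglyMeasurable.pow 2) ?_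
    filter_upwards [hf01] with t ht
    rw [norm_pow, Real.norm_of_nonneg ht.1]
    nlinarith [ht.1, ht.2]
  have h0 : (0:ℝ) ∈ Icc 0 1 := by simp
  have h1 : (1:ℝ) ∈ Icc 0 1 := by simp
  have hf0v := (hfi.mono_set (uIcc_subset_Icc h0 hv)).intervalIntegrable
  have hfv1 := (hfi.mono_set (uIcc_subset_Icc hv h1)).intervalIntegrable
  have hf0v' := hf0v.sub (intervalIntegrable_const (c := (1:ℝ)))
  -- `(f - c) * (f - 1) ≤ 0` on `[0, v]` and `(f - c) * f ≤ 0` on `[v, 1]`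
  have hsq0v : ∫ t in 0..v, f t ^ 2 ≤ ∫ t in 0..v, (f t + c * (f t - 1)) := by
    refine intervalIntegral.integral_mono_ae_restrict hv.1
      (hf2i.mono_set (uIcc_subset_Icc h0 hv)).intervalIntegrable
      (hf0v.add (hf0v'.const_mul c)) ?_
    filter_upwards [ae_restrict_of_ae_restrict_of_subset (Icc_subset_Icc_right hv.2) hf01,
      hleft] with t h01 hcf
    nlinarith [h01.2]
  have hsqv1 : ∫ t in v..1, f t ^ 2 ≤ ∫ t in v..1, c * f t := by
    refine intervalIntegral.integral_mono_ae_restrict hv.2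
      (hf2i.mono_set (uIcc_subset_Icc hv h1)).intervalIntegrable (hfv1.const_mul c) ?_
    filter_upwards [ae_restrict_of_ae_restrict_of_subset (Icc_subset_Icc_left hv.1) hf01,
      hright] with t h01 hfc
    nlinarith [h01.1]
  calc ∫ t in 0..1, f t ^ 2 = (∫ t in 0..v, f t ^ 2) + ∫ t in v..1, f t ^ 2 :=
        (intervalIntegral.integral_add_adjacent_intervals
          (hf2i.mono_set (uIcc_subset_Icc h0 hv)).intervalIntegrable
          (hf2i.mono_set (uIcc_subset_Icc hv h1)).intervalIntegrable).symm
    _ ≤ (∫ t in 0..v, (f t + c * (f t - 1))) + ∫ t in v..1, c * f t := add_le_add hsq0v hsqv1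
    _ = (∫ t in 0..v, f t) + c * ((∫ t in 0..1, f t) - v) := by
        rw [intervalIntegral.integral_add hf0v (hf0v'.const_mul c),
          intervalIntegral.integral_const_mul, intervalIntegral.integral_sub hf0v
            intervalIntegrable_const, intervalIntegral.integral_const_mul,
          ← intervalIntegral.integral_add_adjacent_intervals hf0v hfv1]
        simp only [intervalIntegral.integral_const, smul_eq_mul, sub_zero, mul_one]
        ring

theorem integral_sq_le_integral_of_ae_eq_antitoneOn {f g : ℝ → ℝ} {v : ℝ}
    (hv : v ∈ Icc (0:ℝ) 1) (hg : AntitoneOn g (Icc 0 1))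
    (hfg : ∀ᵐ t ∂volume.restrict (Icc (0:ℝ) 1), f t = g t)
    (hf01 : ∀ᵐ t ∂volume.restrict (Icc (0:ℝ) 1), f t ∈ Icc (0:ℝ) 1)
    (hmass : ∫ t in 0..1, f t ≤ v) :
    ∫ t in 0..1, f t ^ 2 ≤ ∫ t in 0..v, f t := by
  set c := max (g v) 0
  have hfi : IntegrableOn f (Icc 0 1) :=
    (hg.integrableOn_isCompact isCompact_Icc).congr_fun_ae (EventuallyEq.symm hfg)
  have hleft : ∀ᵐ t ∂volume.restrict (Icc 0 v), c ≤ f t := by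
    filter_upwards [ae_restrict_of_ae_restrict_of_subset (Icc_subset_Icc_right hv.2) hfg,
      ae_restrict_of_ae_restrict_of_subset (Icc_subset_Icc_right hv.2) hf01,
      ae_restrict_mem measurableSet_Icc] with t hft h01 ht
    exact max_le (hft ▸ hg ⟨ht.1, ht.2.trans hv.2⟩ hv ht.2) h01.1
  have hright : ∀ᵐ t ∂volume.restrict (Icc v 1), f t ≤ c := by
    filter_upwards [ae_restrict_of_ae_restrict_of_subset (Icc_subset_Icc_left hv.1) hfg,
      ae_restrict_mem measurableSet_Icc] with t hft ht
    exact (hft ▸ hg hv ⟨hv.1.trans ht.1, ht.2⟩ ht.1).trans (le_max_left _ _)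
  have hc : 0 ≤ c := le_max_right _ _
  have := integral_sq_le_of_ae_le_of_ae_ge hv hfi hf01 hleft hright
  nlinarith [mul_nonpos_of_nonneg_of_nonpos hc (sub_nonpos.2 hmass)]

namespace IsCopula

variable {C : ℝ → ℝ → ℝ}

theorem apply_zero_left (hC : IsCopula C) {v : ℝ} (hv : v ∈ Icc (0:ℝ) 1) : C 0 v = 0 :=
  (hC.2.2.1 v hv).1

theorem apply_one_left (hC : IsCopula C) {v : ℝ} (hv : v ∈ Icc (0:ℝ) 1) : C 1 v = v :=
  (hC.2.2.1 v hv).2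

theorem monotoneOn_left (hC : IsCopula C) {v : ℝ} (hv : v ∈ Icc (0:ℝ) 1) :
    MonotoneOn (fun u => C u v) (Icc 0 1) := by
  intro a ha b hb hab
  obtain ⟨-, hbot, -, hrect⟩ := hC
  have := hrect a ha b hb 0 (by simp) v hv hab hv.1
  linarith [(hbot a ha).1, (hbot b hb).1]

theorem monotoneOn_right (hC : IsCopula C) {u : ℝ} (hu : u ∈ Icc (0:ℝ) 1) :
    MonotoneOn (C u) (Icc 0 1) := by
  intro a ha b hb hab
  obtain ⟨-, -, hleft, hrect⟩ := hC
  have := hrect 0 (by simp) u hu a ha b hb hu.1 hab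
  linarith [(hleft a ha).1, (hleft b hb).1]

theorem sub_le_sub_left (hC : IsCopula C) {v : ℝ} (hv : v ∈ Icc (0:ℝ) 1) {a b : ℝ}
    (ha : a ∈ Icc (0:ℝ) 1) (hb : b ∈ Icc (0:ℝ) 1) (hab : a ≤ b) :
    C b v - C a v ≤ b - a := by
  obtain ⟨-, htop, -, hrect⟩ := hC
  have := hrect a ha b hb v hv 1 (by simp) hab hv.2
  linarith [(htop a ha).2, (htop b hb).2]

theorem lipschitzOnWith_left (hC : IsCopula C) {v : ℝ} (hv : v ∈ Icc (0:ℝ) 1) :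
    LipschitzOnWith 1 (fun u => C u v) (Icc 0 1) := by
  refine LipschitzOnWith.of_le_add fun x hx y hy => ?_
  rcases le_total x y with hxy | hyx
  · linarith [hC.monotoneOn_left hv hx hy hxy, dist_nonneg (x := x) (y := y)]
  · rw [Real.dist_eq, abs_of_nonneg (sub_nonneg.2 hyx)]
    linarith [hC.sub_le_sub_left hv hy hx hyx]

theorem d1_mem_Icc (hC : IsCopula C) {v : ℝ} (hv : v ∈ Icc (0:ℝ) 1) {t : ℝ}
    (ht : t ∈ Ioo (0:ℝ) 1) : d1 C t v ∈ Icc 0 1 := by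
  have hnhds : Icc (0:ℝ) 1 ∈ 𝓝 t := Icc_mem_nhds ht.1 ht.2
  constructor
  · rw [d1, ← derivWithin_of_mem_nhds hnhds]
    exact (hC.monotoneOn_left hv).derivWithin_nonneg
  · have := norm_deriv_le_of_lipschitzOn hnhds (hC.lipschitzOnWith_left hv)
    exact (le_abs_self (deriv (fun u => C u v) t)).trans (by simpa using this)

theorem integral_d1 (hC : IsCopula C) {v : ℝ} (hv : v ∈ Icc (0:ℝ) 1) {b : ℝ}
    (hb : b ∈ Icc (0:ℝ) 1) : ∫ t in 0..b, d1 C t v = C b v := by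
  have hlip : LipschitzOnWith 1 (fun u => C u v) (uIcc 0 b) :=
    (hC.lipschitzOnWith_left hv).mono (by rw [uIcc_of_le hb.1]; exact Icc_subset_Icc_right hb.2)
  simpa [d1, hC.apply_zero_left hv] using hlip.absolutelyContinuousOnInterval.integral_deriv_eq_sub

theorem monotoneOn_diag (hC : IsCopula C) : MonotoneOn (fun v => C v v) (Icc 0 1) :=
  fun _ ha _ hb hab => (hC.monotoneOn_left ha ha hb hab).trans (hC.monotoneOn_right hb ha hb hab)

theorem integral_d1_sq_le_diag (hC : IsCopula C) (hSI : IsSI C) {v : ℝ} (hv : v ∈ Icc (0:ℝ) 1) :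
    ∫ t in 0..1, d1 C t v ^ 2 ≤ C v v := by
  obtain ⟨g, hg, hd1g⟩ := hSI v hv
  have hd1 : ∀ᵐ t ∂volume.restrict (Icc (0:ℝ) 1), d1 C t v ∈ Icc 0 1 := by
    rw [← Measure.restrict_congr_set Ioo_ae_eq_Icc]
    exact ae_restrict_of_forall_mem measurableSet_Ioo fun t ht => hC.d1_mem_Icc hv ht
  have hmass : ∫ t in 0..1, d1 C t v ≤ v := by
    rw [hC.integral_d1 hv (by simp), hC.apply_one_left hv]
  simpa only [hC.integral_d1 hv hv] using
    integral_sq_le_integral_of_ae_eq_antitoneOn hv hg hd1g hd1 hmass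

end IsCopula

/-- Every stochastically increasing bivariate copula satisfies `ξ(C) ≤ ψ(C)`. -/
theorem xi_le_psi_of_SI (C : ℝ → ℝ → ℝ) (hC : IsCopula C) (hSI : IsSI C) :
    xi C ≤ psi C := by
  have hdiag : IntegrableOn (fun v => C v v) (Ioc 0 1) :=
    (hC.monotoneOn_diag.integrableOn_isCompact isCompact_Icc).mono_set Ioc_subset_Icc_self
  have hle : ∫ v in 0..1, ∫ t in 0..1, d1 C t v ^ 2 ≤ ∫ v in 0..1, C v v := by
    simp only [intervalIntegral.integral_of_le zero_le_one]
    -- the left integrand need not be integrable in `v`: nonnegativity covers the junk value `0`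
    refine integral_mono_of_nonneg (Eventually.of_forall fun v => ?_) hdiag
      (ae_restrict_of_forall_mem measurableSet_Ioc fun v hv => by
        simpa only [intervalIntegral.integral_of_le zero_le_one] using
          hC.integral_d1_sq_le_diag hSI (Ioc_subset_Icc_self hv))
    exact setIntegral_nonneg measurableSet_Ioc fun t _ => sq_nonneg _
  simp only [xi, psi]
  linarith
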